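/- arXiv:2510.07138 — 3 statements merged into one kernel-verified Lean document; each statement's English description precedes it below -/
import Mathlib

section
/- For all α > 0 and β > 1, the series ∑_{j=0}^∞ exp(-α β^j) is bounded above by (β / (α ln β)) · exp(-α/β). -/
lemma stmt4_key (α β : ℝ) (hα : 0 < α) (hβ : 1 < β) (j : ℕ) :
    Real.exp (-α * β ^ j) ≤ β / (α * Real.log β) *
      (Real.exp (-(α * β ^ j) / β) - Real.exp (-(α * β ^ j))) := by
  have hβ0 : 0 < β := by linarith
  have hL : 0 < Real.log β := Real.log_pos hβ
  set s : ℝ := α * β ^ j with hs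
  have hs0 : 0 < s := by positivity
  have hsα : α ≤ s := by
    have h1 : (1:ℝ) ≤ β ^ j := one_le_pow₀ hβ.le
    nlinarith
  have hC : 0 < β / (α * Real.log β) := by positivity
  have hexp : Real.exp (-s) * ((β - 1) * (s / β)) ≤ Real.exp (-s/β) - Real.exp (-s) := by
    have h1 : Real.exp (-s/β) = Real.exp (-s) * Real.exp ((β - 1) * (s / β)) := by
      rw [← Real.exp_add]
      congr 1
      field_simp
      ring
    rw [h1]
    have h2 := Real.add_one_le_exp ((β - 1) * (s / β))
    nlinarith [Real.exp_pos (-s)]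
  have hlog : Real.log β ≤ β - 1 := Real.log_le_sub_one_of_pos hβ0
  have hfac : 1 ≤ β / (α * Real.log β) * ((β - 1) * (s / β)) := by
    have h3 : α * Real.log β ≤ (β - 1) * s := by nlinarith
    rw [div_mul_eq_mul_div, le_div_iff₀ (by positivity : 0 < α * Real.log β)]
    have he : β * ((β - 1) * (s / β)) = (β - 1) * s := by
      field_simp
    rw [he]; linarith
  have h4 : Real.exp (-s) ≤ β / (α * Real.log β) * (Real.exp (-s) * ((β - 1) * (s / β))) := by
    nlinarith [Real.exp_pos (-s)]
  have h5 : β / (α * Real.log β) * (Real.exp (-s) * ((β - 1) * (s / β))) ≤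
      β / (α * Real.log β) * (Real.exp (-s/β) - Real.exp (-s)) :=
    mul_le_mul_of_nonneg_left hexp hC.le
  have : Real.exp (-s) ≤ β / (α * Real.log β) * (Real.exp (-s/β) - Real.exp (-s)) :=
    h4.trans h5
  simpa [hs, neg_mul, neg_div] using this

/-- For all `α > 0` and `β > 1`,
`∑_{j=0}^∞ exp(-α β^j) ≤ (β / (α ln β)) exp(-α/β)`. -/
theorem stmt4 (α β : ℝ) (hα : 0 < α) (hβ : 1 < β) :
    ∑' j : ℕ, Real.exp (-α * β ^ j) ≤ β / (α * Real.log β) * Real.exp (-α / β) := by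
  have hL : 0 < Real.log β := Real.log_pos hβ
  set C := β / (α * Real.log β) with hCdef
  have hC : 0 < C := by positivity
  set g : ℕ → ℝ := fun j => C * Real.exp (-(α * β ^ j) / β) with hg
  apply Real.tsum_le_of_sum_range_le (fun n => (Real.exp_pos _).le)
  intro n
  have hstep : ∀ j ∈ Finset.range n, Real.exp (-α * β ^ j) ≤ g j - g (j + 1) := by
    intro j _
    have h1 := stmt4_key α β hα hβ j
    have h2 : g (j + 1) = C * Real.exp (-(α * β ^ j)) := by
      simp only [hg]
      congr 1
      rw [pow_succ]
      field_simp
    rw [h2, hg]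
    simp only
    calc Real.exp (-α * β ^ j) ≤
        C * (Real.exp (-(α * β ^ j) / β) - Real.exp (-(α * β ^ j))) := h1
      _ = C * Real.exp (-(α * β ^ j) / β) - C * Real.exp (-(α * β ^ j)) := by ring
  calc ∑ j ∈ Finset.range n, Real.exp (-α * β ^ j)
      ≤ ∑ j ∈ Finset.range n, (g j - g (j + 1)) := Finset.sum_le_sum hstep
    _ = g 0 - g n := Finset.sum_range_sub' g n
    _ ≤ g 0 := by
        have : 0 ≤ g n := by positivity
        linarith
    _ = C * Real.exp (-α / β) := by simp [hg, neg_div]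
end

section
/- Discrete embedding ℓ¹ ↪ H^{-1} in dimension one: there exists a universal constant C such that for all M ≥ 1 and all u ∈ ℝ^{T_M}, ‖u‖_{-1,M} ≤ C·‖u‖_{1,M}, where ‖u‖_{1,M} = (1/M)∑_{j=1}^M |u_j|. -/
/-- The periodic discrete Laplacian `(Δ_M u)_j = M² (u_{j+1} + u_{j-1} - 2 u_j)`. -/
noncomputable def lapM (M : ℕ) [NeZero M] (u : ZMod M → ℝ) : ZMod M → ℝ :=
  fun j => (M : ℝ) ^ 2 * (u (j + 1) + u (j - 1) - 2 * u j)

/-- The uniformly weighted inner product `⟨u, v⟩_{2,M} = (1/M) ∑_j u_j v_j`. -/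
noncomputable def innerM (M : ℕ) [NeZero M] (u v : ZMod M → ℝ) : ℝ :=
  (1 / (M : ℝ)) * ∑ j : ZMod M, u j * v j

/-- The mean `[u]_M = (1/M) ∑_j u_j`. -/
noncomputable def meanM (M : ℕ) [NeZero M] (u : ZMod M → ℝ) : ℝ :=
  (1 / (M : ℝ)) * ∑ j : ZMod M, u j

/-- The discrete `ℓ¹` norm `‖u‖_{1,M} = (1/M) ∑_j |u_j|`. -/
noncomputable def normOneM (M : ℕ) [NeZero M] (u : ZMod M → ℝ) : ℝ :=
  (1 / (M : ℝ)) * ∑ j : ZMod M, |u j|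

/-
Write `ũ = u - [u]_M`. Testing `-Δ_M w = ũ` against `w` and summing by parts turns
`E = ⟨ũ, w⟩_{2,M}` into the Dirichlet energy `M ∑ (w_{j+1} - w_j)²`, which by Cauchy–Schwarz
dominates `D²` for the total variation `D = ∑ |w_{j+1} - w_j|`. On the circle a mean-free `w`
is bounded by `D`, so `E ≤ ‖ũ‖_{1,M} D ≤ 2 ‖u‖_{1,M} √E`, i.e. `E ≤ 4 ‖u‖_{1,M}²`. Together with
`[u]_M² ≤ ‖u‖_{1,M}²` this gives the bound with `C = 3`.
-/

open Finset fwdDiff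

theorem sum_two_mul_sub_shifts_mul_self_eq_sum_sq_fwdDiff {G : Type*} [AddCommGroup G] [Fintype G]
    (a : G) (f : G → ℝ) :
    ∑ x, (2 * f x - f (x + a) - f (x - a)) * f x = ∑ x, Δ_[a] f x ^ 2 := by
  have h_sq : ∑ x, f (x + a) ^ 2 = ∑ x, f x ^ 2 :=
    Equiv.sum_comp (Equiv.addRight a) fun x => f x ^ 2
  have h_cross : ∑ x, f (x - a) * f x = ∑ x, f x * f (x + a) :=
    Fintype.sum_equiv (Equiv.subRight a) _ _ fun x => by simp
  rw [← sub_eq_zero, ← sum_sub_distrib]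
  calc ∑ x, ((2 * f x - f (x + a) - f (x - a)) * f x - Δ_[a] f x ^ 2)
      = (∑ x, f x ^ 2 - ∑ x, f (x + a) ^ 2) + (∑ x, f x * f (x + a) - ∑ x, f (x - a) * f x) := by
        rw [← sum_sub_distrib, ← sum_sub_distrib, ← sum_add_distrib]
        exact sum_congr rfl fun x _ => by rw [fwdDiff]; ring
    _ = 0 := by rw [h_sq, h_cross]; ring

theorem abs_le_of_sum_eq_zero_of_abs_sub_le {ι : Type*} [Fintype ι] {f : ι → ℝ} {D : ℝ}
    (hsum : ∑ i, f i = 0) (hosc : ∀ i j, |f j - f i| ≤ D) (j : ι) : |f j| ≤ D := by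
  have hcard : (0 : ℝ) < Fintype.card ι := by exact_mod_cast Fintype.card_pos_iff.mpr ⟨j⟩
  have hsum_sub : Fintype.card ι * f j = ∑ i, (f j - f i) := by
    rw [sum_sub_distrib, hsum, sum_const, card_univ, nsmul_eq_mul, sub_zero]
  refine le_of_mul_le_mul_left ?_ hcard
  calc Fintype.card ι * |f j| = |∑ i, (f j - f i)| := by rw [← hsum_sub, abs_mul, Nat.abs_cast]
    _ ≤ ∑ i, |f j - f i| := abs_sum_le_sum_abs _ _
    _ ≤ ∑ _i : ι, D := sum_le_sum fun i _ => hosc i j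
    _ = Fintype.card ι * D := by rw [sum_const, card_univ, nsmul_eq_mul]

theorem le_sq_of_le_mul_of_sq_le {x a d : ℝ} (hxd : x ≤ a * d) (hdx : d ^ 2 ≤ x) :
    x ≤ a ^ 2 := by
  nlinarith [sq_nonneg (d - a), sq_nonneg d]

namespace ZMod

variable {M : ℕ} [NeZero M]

theorem sum_range_natCast_le_sum {g : ZMod M → ℝ} (hg : ∀ x, 0 ≤ g x) {n : ℕ} (hn : n ≤ M) :
    ∑ i ∈ range n, g i ≤ ∑ x, g x := by
  have hinj : Set.InjOn (fun i : ℕ => (i : ZMod M)) (range n) := fun i hi k hk hik => by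
    have hi : i < M := (mem_range.mp hi).trans_le hn
    have hk : k < M := (mem_range.mp hk).trans_le hn
    simpa [val_natCast_of_lt hi, val_natCast_of_lt hk] using congrArg val hik
  rw [← sum_image hinj]
  exact sum_le_sum_of_subset_of_nonneg (subset_univ _) fun x _ _ => hg x

theorem abs_sub_le_sum_abs_fwdDiff (f : ZMod M → ℝ) (j k : ZMod M) :
    |f k - f j| ≤ ∑ x, |Δ_[1] f x| := by
  set n := (k - j).val
  have htel : f k - f j = ∑ i ∈ range n, Δ_[1] f (j + i) := by
    have := sum_range_sub (fun i : ℕ => f (j + i)) n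
    simp only [Nat.cast_add, Nat.cast_one, Nat.cast_zero, add_zero, n, natCast_zmod_val,
      add_sub_cancel] at this
    simpa only [fwdDiff, add_assoc] using this.symm
  calc |f k - f j| ≤ ∑ i ∈ range n, |Δ_[1] f (j + i)| := htel ▸ abs_sum_le_sum_abs _ _
    _ ≤ ∑ x, |Δ_[1] f (j + x)| :=
      sum_range_natCast_le_sum (g := fun x => |Δ_[1] f (j + x)|) (fun _ => abs_nonneg _) (val_lt _).le
    _ = ∑ x, |Δ_[1] f x| := Equiv.sum_comp (Equiv.addLeft j) fun x => |Δ_[1] f x|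

end ZMod

section DiscreteNorms

variable {M : ℕ} [NeZero M]

theorem innerM_neg_lapM_self (w : ZMod M → ℝ) :
    innerM M (fun j => -lapM M w j) w = M * ∑ j, Δ_[1] w j ^ 2 := by
  have hM : (M : ℝ) ≠ 0 := NeZero.ne _
  rw [innerM, ← sum_two_mul_sub_shifts_mul_self_eq_sum_sq_fwdDiff, mul_sum, mul_sum]
  refine sum_congr rfl fun j _ => ?_
  field_simp
  rw [lapM]
  ring

theorem innerM_le_normOneM_mul (v : ZMod M → ℝ) {w : ZMod M → ℝ} {D : ℝ}
    (hw : ∀ j, |w j| ≤ D) : innerM M v w ≤ normOneM M v * D := by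
  rw [innerM, normOneM, mul_assoc, sum_mul]
  refine mul_le_mul_of_nonneg_left (sum_le_sum fun j _ => ?_) (by positivity)
  calc v j * w j ≤ |v j| * |w j| := (le_abs_self _).trans (abs_mul _ _).le
    _ ≤ |v j| * D := by gcongr; exact hw j

theorem abs_meanM_le_normOneM (u : ZMod M → ℝ) : |meanM M u| ≤ normOneM M u := by
  rw [meanM, normOneM, abs_mul, abs_of_nonneg (by positivity)]
  gcongr
  exact abs_sum_le_sum_abs _ _

theorem normOneM_sub_meanM_le (u : ZMod M → ℝ) :
    normOneM M (fun j => u j - meanM M u) ≤ 2 * normOneM M u := by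
  have hM : (M : ℝ) ≠ 0 := NeZero.ne _
  calc normOneM M (fun j => u j - meanM M u) ≤ normOneM M u + |meanM M u| := by
        rw [normOneM, normOneM]
        calc 1 / (M : ℝ) * ∑ j, |u j - meanM M u| ≤ 1 / (M : ℝ) * ∑ j, (|u j| + |meanM M u|) := by
              gcongr with j; exact abs_sub _ _
          _ = 1 / (M : ℝ) * ∑ j, |u j| + |meanM M u| := by
              rw [sum_add_distrib, sum_const, card_univ, ZMod.card, nsmul_eq_mul]; field_simp
    _ ≤ 2 * normOneM M u := by linarith [abs_meanM_le_normOneM u]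

end DiscreteNorms

/-- Discrete embedding `ℓ¹ ↪ H^{-1}` in dimension one: there is a universal `C`
such that `‖u‖_{-1,M} ≤ C ‖u‖_{1,M}` for all `M ≥ 1` and all `u`.  The negative
norm `‖u‖_{-1,M}² = [u]_M² + ⟨ũ, (-Δ_M)⁻¹ ũ⟩_{2,M}` is encoded through the
mean-free solution `w` of `-Δ_M w = ũ`, `ũ = u - [u]_M`. -/
theorem stmt9 : ∃ C : ℝ, 0 < C ∧
    ∀ (M : ℕ) [NeZero M], ∀ u w : ZMod M → ℝ,
      (∑ j : ZMod M, w j = 0) →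
      (∀ j, -(lapM M w j) = u j - meanM M u) →
      Real.sqrt ((meanM M u) ^ 2 + innerM M (fun j => u j - meanM M u) w)
        ≤ C * normOneM M u := by
  refine ⟨3, by norm_num, fun M _ u w hsum hw => ?_⟩
  set N := normOneM M u
  set E := innerM M (fun j => u j - meanM M u) w
  set D := ∑ j, |Δ_[1] w j|
  have hN : 0 ≤ N := (abs_nonneg _).trans (abs_meanM_le_normOneM u)
  have hE : E = M * ∑ j, Δ_[1] w j ^ 2 := by
    rw [← innerM_neg_lapM_self]
    exact congrArg (innerM M · w) (funext fun j => (hw j).symm)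
  have hD_sq : D ^ 2 ≤ E := by
    simpa [hE, sq_abs] using sq_sum_le_card_mul_sum_sq (s := univ) (f := fun j => |Δ_[1] w j|)
  have hw_le : ∀ k, |w k| ≤ D :=
    abs_le_of_sum_eq_zero_of_abs_sub_le hsum (ZMod.abs_sub_le_sum_abs_fwdDiff w)
  have hE_le : E ≤ 2 * N * D :=
    (innerM_le_normOneM_mul _ hw_le).trans
      (mul_le_mul_of_nonneg_right (normOneM_sub_meanM_le u) (sum_nonneg fun _ _ => abs_nonneg _))
  have hE_sq : E ≤ (2 * N) ^ 2 := le_sq_of_le_mul_of_sq_le hE_le hD_sq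
  have hm_sq : meanM M u ^ 2 ≤ N ^ 2 :=
    sq_le_sq.mpr ((abs_meanM_le_normOneM u).trans_eq (abs_of_nonneg hN).symm)
  exact Real.sqrt_le_iff.mpr ⟨by linarith, by nlinarith⟩
end

section
/- Let M ≥ 1 and let e_i ∈ ℝ^{T_M} be the i-th canonical basis vector (value 1 at site i, 0 elsewhere, indices mod M). Then ‖e_i‖_{-1,M}² ≤ C/M and ‖e_{i+1} - e_i‖_{-1,M}² ≤ C/M³ for a universal constant C independent of M and i. -/
/-- The `i`-th canonical basis vector of `ℝ^{T_M}` (indices mod `M`). -/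
noncomputable def eM (M : ℕ) [NeZero M] (i : ZMod M) : ZMod M → ℝ :=
  fun j => if j = i then 1 else 0

section FiniteAddCommGroup

variable {α R : Type*} [AddCommGroup α] [Fintype α] [CommRing R]

lemma sum_fwdDiff (h : α) (f : α → R) : ∑ j, fwdDiff h f j = 0 := by
  simp only [fwdDiff, Finset.sum_sub_distrib]
  rw [Fintype.sum_equiv (Equiv.addRight h) (fun j => f (j + h)) f (fun _ => rfl), sub_self]

lemma sum_sub_comp_sub_mul (h : α) (g v : α → R) :
    ∑ j, (g (j - h) - g j) * v j = ∑ j, g j * fwdDiff h v j := by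
  have hshift : ∑ j, g (j - h) * v j = ∑ j, g j * v (j + h) :=
    Fintype.sum_equiv (Equiv.subRight h) _ _ (fun j => by simp)
  simp only [fwdDiff, sub_mul, mul_sub, Finset.sum_sub_distrib, hshift]

end FiniteAddCommGroup

namespace ZMod

variable {M : ℕ} [NeZero M] {R : Type*} [Field R] [CharZero R]

lemma eq_of_sub_one_sub_eq {f g : ZMod M → R} (hd : ∀ j, f (j - 1) - f j = g (j - 1) - g j)
    (hs : ∑ j, f j = ∑ j, g j) : f = g := by
  set d := f - g
  have hstep (j : ZMod M) : d (j - 1) = d j := by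
    simp only [d, Pi.sub_apply]
    linear_combination hd j
  have hconst (j : ZMod M) : d j = d 0 := by
    suffices ∀ n : ℕ, d n = d 0 by rw [← natCast_zmod_val j, this]
    intro n
    induction n with
    | zero => simp
    | succ n ih => rw [← ih, ← hstep, Nat.cast_succ, add_sub_cancel_right]
  have hsum : (M : R) * d 0 = 0 := by
    calc (M : R) * d 0 = ∑ j, d j := by simp [hconst]
      _ = 0 := by simp [d, Finset.sum_sub_distrib, hs]
  have hd0 : d 0 = 0 := (mul_eq_zero.mp hsum).resolve_left (Nat.cast_ne_zero.mpr (NeZero.ne M))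
  funext j
  exact sub_eq_zero.mp ((hconst j).trans hd0)

lemma sum_cast : ∑ a : ZMod M, (cast a : ℝ) = M * (M - 1) / 2 := by
  obtain ⟨n, rfl⟩ := Nat.exists_eq_succ_of_ne_zero (NeZero.ne M)
  simp only [← natCast_val]
  have hrange : ∑ a : ZMod (n + 1), (a.val : ℝ) = ∑ k ∈ Finset.range (n + 1), (k : ℝ) :=
    Fin.sum_univ_eq_sum_range (fun k => (k : ℝ)) (n + 1)
  have hgauss : ((∑ k ∈ Finset.range (n + 1), k) * 2 : ℕ) = (n + 1) * n :=
    Finset.sum_range_id_mul_two (n + 1)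
  have hgauss_real := congrArg (Nat.cast : ℕ → ℝ) hgauss
  push_cast at hgauss_real ⊢
  rw [hrange]
  linarith

end ZMod

variable {M : ℕ} [NeZero M]

lemma lapM_eq_mul_sub_fwdDiff (w : ZMod M → ℝ) (j : ZMod M) :
    lapM M w j = (M : ℝ) ^ 2 * (fwdDiff 1 w j - fwdDiff 1 w (j - 1)) := by
  simp only [lapM, fwdDiff, sub_add_cancel]
  ring

lemma innerM_eq_mul_sum_sq {u w G : ZMod M → ℝ} (hw : ∀ j, -lapM M w j = u j)
    (hG : ∀ j, (M : ℝ) ^ 2 * (G (j - 1) - G j) = u j) (hG_sum : ∑ j, G j = 0) :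
    innerM M u w = M * ∑ j, G j ^ 2 := by
  have hM : (M : ℝ) ≠ 0 := Nat.cast_ne_zero.mpr (NeZero.ne M)
  have hgrad : fwdDiff 1 w = G := by
    refine ZMod.eq_of_sub_one_sub_eq (fun j => ?_) (by rw [sum_fwdDiff, hG_sum])
    refine mul_left_cancel₀ (pow_ne_zero 2 hM) ?_
    rw [hG, ← hw, lapM_eq_mul_sub_fwdDiff]
    ring
  calc innerM M u w = 1 / M * ∑ j, (M : ℝ) ^ 2 * ((G (j - 1) - G j) * w j) := by
        simp only [innerM, ← hG, mul_assoc]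
    _ = M * ∑ j, G j * fwdDiff 1 w j := by
        rw [← Finset.mul_sum, sum_sub_comp_sub_mul]
        field_simp
    _ = M * ∑ j, G j ^ 2 := by simp only [hgrad, sq]

lemma meanM_eM (i : ZMod M) : meanM M (eM M i) = 1 / M := by
  simp [meanM, eM]

lemma eM_sub_one (i j : ZMod M) : eM M i (j - 1) = eM M (i + 1) j := by
  simp only [eM, sub_eq_iff_eq_add]

lemma meanM_eM_add_one_sub_eM (i : ZMod M) :
    meanM M (fun j => eM M (i + 1) j - eM M i j) = 0 := by
  simp [meanM, eM, Finset.sum_sub_distrib]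

lemma sum_sq_eM_sub_meanM (i : ZMod M) :
    ∑ j, (eM M i j - meanM M (eM M i)) ^ 2 = 1 - 1 / M := by
  simp [meanM_eM, eM, sub_sq, Finset.sum_add_distrib, Finset.sum_sub_distrib]
  field_simp
  ring

noncomputable def gradGreenM (M : ℕ) [NeZero M] (i j : ZMod M) : ℝ :=
  ((ZMod.cast (j - i) : ℝ) - ((M : ℝ) - 1) / 2) / (M : ℝ) ^ 3

lemma mul_gradGreenM_sub_one_sub (i j : ZMod M) :
    (M : ℝ) ^ 2 * (gradGreenM M i (j - 1) - gradGreenM M i j) = eM M i j - meanM M (eM M i) := by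
  have hM : (M : ℝ) ≠ 0 := Nat.cast_ne_zero.mpr (NeZero.ne M)
  rcases eq_or_ne j i with rfl | hji
  · simp only [gradGreenM, sub_right_comm j 1 j, sub_self, ZMod.cast_sub_one, if_true,
      ZMod.cast_zero, meanM_eM, eM]
    field_simp
    ring
  · simp only [gradGreenM, sub_right_comm j 1 i, ZMod.cast_sub_one, sub_eq_zero, hji, if_false,
      meanM_eM, eM]
    field_simp
    ring

lemma sum_gradGreenM (i : ZMod M) : ∑ j, gradGreenM M i j = 0 := by
  have hshift : ∑ j : ZMod M, (ZMod.cast (j - i) : ℝ) = ∑ a : ZMod M, (ZMod.cast a : ℝ) :=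
    Fintype.sum_equiv (Equiv.subRight i) _ _ (fun _ => rfl)
  simp only [gradGreenM, ← Finset.sum_div, Finset.sum_sub_distrib, hshift, ZMod.sum_cast,
    Finset.sum_const, Finset.card_univ, ZMod.card, nsmul_eq_mul]
  ring

lemma sq_gradGreenM_le (i j : ZMod M) : gradGreenM M i j ^ 2 ≤ 1 / (4 * (M : ℝ) ^ 4) := by
  have hval : (ZMod.cast (j - i) : ℝ) + 1 ≤ M := by
    rw [← ZMod.natCast_val]
    exact_mod_cast ZMod.val_lt (j - i)
  have hnonneg : (0 : ℝ) ≤ ZMod.cast (j - i) := by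
    rw [← ZMod.natCast_val]
    exact Nat.cast_nonneg _
  have habs : |(ZMod.cast (j - i) : ℝ) - ((M : ℝ) - 1) / 2| ≤ M / 2 := by
    rw [abs_le]; constructor <;> linarith
  calc gradGreenM M i j ^ 2
      = |(ZMod.cast (j - i) : ℝ) - ((M : ℝ) - 1) / 2| ^ 2 / ((M : ℝ) ^ 3) ^ 2 := by
        rw [gradGreenM, div_pow, sq_abs]
    _ ≤ ((M : ℝ) / 2) ^ 2 / ((M : ℝ) ^ 3) ^ 2 := by gcongr
    _ = 1 / (4 * (M : ℝ) ^ 4) := by field_simp; ring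

lemma normSq_eM_le (i : ZMod M) {w : ZMod M → ℝ}
    (hw : ∀ j, -lapM M w j = eM M i j - meanM M (eM M i)) :
    meanM M (eM M i) ^ 2 + innerM M (fun j => eM M i j - meanM M (eM M i)) w ≤ 2 / M := by
  have hM : (1 : ℝ) ≤ M := Nat.one_le_cast.mpr (NeZero.one_le)
  have hsum : ∑ j, gradGreenM M i j ^ 2 ≤ M * (1 / (4 * (M : ℝ) ^ 4)) := by
    simpa using Finset.sum_le_sum (s := Finset.univ) (fun j _ => sq_gradGreenM_le i j)
  rw [innerM_eq_mul_sum_sq hw (mul_gradGreenM_sub_one_sub i) (sum_gradGreenM i), meanM_eM]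
  calc (1 / (M : ℝ)) ^ 2 + M * ∑ j, gradGreenM M i j ^ 2
      ≤ (1 / (M : ℝ)) ^ 2 + M * (M * (1 / (4 * (M : ℝ) ^ 4))) := by gcongr
    _ = 5 / (4 * (M : ℝ) ^ 2) := by field_simp; ring
    _ ≤ 2 / M := by
        rw [div_le_div_iff₀ (by positivity) (by positivity)]
        nlinarith

lemma normSq_eM_add_one_sub_eM_le (i : ZMod M) {w : ZMod M → ℝ}
    (hw : ∀ j, -lapM M w j =
      (eM M (i + 1) j - eM M i j) - meanM M (fun j => eM M (i + 1) j - eM M i j)) :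
    meanM M (fun j => eM M (i + 1) j - eM M i j) ^ 2 +
      innerM M (fun j => (eM M (i + 1) j - eM M i j)
        - meanM M (fun j => eM M (i + 1) j - eM M i j)) w ≤ 2 / (M : ℝ) ^ 3 := by
  have hM : (0 : ℝ) < M := Nat.cast_pos.mpr (NeZero.pos M)
  set G : ZMod M → ℝ := fun j => (eM M i j - meanM M (eM M i)) / (M : ℝ) ^ 2
  have hG (j : ZMod M) : (M : ℝ) ^ 2 * (G (j - 1) - G j) =
      (eM M (i + 1) j - eM M i j) - meanM M (fun j => eM M (i + 1) j - eM M i j) := by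
    simp only [G, eM_sub_one, meanM_eM_add_one_sub_eM]
    field_simp
    ring
  have hG_sum : ∑ j, G j = 0 := by
    simp [G, ← Finset.sum_div, Finset.sum_sub_distrib, meanM_eM, eM]
  have hsq : ∑ j, G j ^ 2 = (1 - 1 / M) / (M : ℝ) ^ 4 := by
    simp only [G, div_pow, ← Finset.sum_div, sum_sq_eM_sub_meanM]
    ring
  rw [innerM_eq_mul_sum_sq hw hG hG_sum, meanM_eM_add_one_sub_eM, hsq]
  calc (0 : ℝ) ^ 2 + M * ((1 - 1 / M) / (M : ℝ) ^ 4) = (1 - 1 / M) / (M : ℝ) ^ 3 := by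
        field_simp
        ring
    _ ≤ 2 / (M : ℝ) ^ 3 := by
        gcongr
        linarith [one_div_pos.mpr hM]

/-- `‖e_i‖²_{-1,M} ≤ C/M` and `‖e_{i+1} - e_i‖²_{-1,M} ≤ C/M³` for a universal
constant `C`, where `e_i` is the `i`-th canonical basis vector and
`‖u‖_{-1,M}² = [u]_M² + ⟨ũ, (-Δ_M)⁻¹ ũ⟩_{2,M}` is encoded via the mean-free
solutions `w`, `w'` of the corresponding discrete Poisson equations. -/
theorem stmt10 : ∃ C : ℝ, 0 < C ∧
    ∀ (M : ℕ) [NeZero M], ∀ (i : ZMod M) (w w' : ZMod M → ℝ),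
      (∑ j : ZMod M, w j = 0) →
      (∀ j, -(lapM M w j) = eM M i j - meanM M (eM M i)) →
      (∑ j : ZMod M, w' j = 0) →
      (∀ j, -(lapM M w' j) =
        (eM M (i+1) j - eM M i j) - meanM M (fun j => eM M (i+1) j - eM M i j)) →
      (meanM M (eM M i)) ^ 2 +
          innerM M (fun j => eM M i j - meanM M (eM M i)) w
        ≤ C / (M : ℝ) ∧
      (meanM M (fun j => eM M (i+1) j - eM M i j)) ^ 2 +
          innerM M (fun j => (eM M (i+1) j - eM M i j)
            - meanM M (fun j => eM M (i+1) j - eM M i j)) w'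
        ≤ C / (M : ℝ) ^ 3 := by
  exact ⟨2, two_pos, fun M _ i w w' _ hw _ hw' =>
    ⟨normSq_eM_le i hw, normSq_eM_add_one_sub_eM_le i hw'⟩⟩
end
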